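/- arXiv:1409.1858 — 2 statements merged into one kernel-verified Lean document; each statement's English description precedes it below -/
import Mathlib

section
/- Let f : ℝ → ℝ be convex and locally Lipschitz, and for each u ∈ ℝ let ψ(t,u) denote the solution of ψ' = f(ψ), ψ(0,u) = u, defined on [0,T]. Then for each fixed t ∈ [0,T], the map u ↦ ψ(t,u) is convex on the set of initial values for which the solution exists up to time t. -/
/-!
Write `y = a ψ(·, u₁) + b ψ(·, u₂)`. By convexity of `f`,
`y' = a f(ψ(·, u₁)) + b f(ψ(·, u₂)) ≥ f(y)`, so `y` is a supersolution of `x' = f(x)`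
starting at `a u₁ + b u₂`, while `ψ(·, a u₁ + b u₂)` is a solution with the same initial
value.
Since `f` is locally Lipschitz, the comparison principle keeps the solution below the
supersolution.
-/

open Real Set

theorem nonpos_of_deriv_right_le_mul_of_nonneg {φ φ' : ℝ → ℝ} {K a b : ℝ}
    (hφ : ContinuousOn φ (Icc a b))
    (hφ' : ∀ x ∈ Ico a b, HasDerivWithinAt φ (φ' x) (Ici x) x)
    (ha : φ a ≤ 0) (bound : ∀ x ∈ Ico a b, 0 ≤ φ x → φ' x ≤ K * φ x) :
    ∀ x ∈ Icc a b, φ x ≤ 0 := by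
  set M := |K| + 1
  have hKM : K < M := (le_abs_self K).trans_lt (lt_add_one _)
  -- Fence `φ` by the strict supersolutions `ε e^{M (x - a)}` of `φ' = K φ`; let `ε → 0`.
  have hfence : ∀ ε > 0, ∀ x ∈ Icc a b, φ x ≤ ε * exp (M * (x - a)) := by
    intro ε hε
    refine image_le_of_deriv_right_lt_deriv_boundary hφ hφ'
      (by simpa using ha.trans hε.le) (B' := fun x => ε * (exp (M * (x - a)) * M))
      (fun x => ?_) ?_
    · exact (((hasDerivAt_id x).sub_const a).const_mul M).exp.const_mul ε |>.congr_deriv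
        (by simp)
    · intro x hx hφB
      have hB : 0 < ε * exp (M * (x - a)) := by positivity
      calc φ' x ≤ K * φ x := bound x hx (hφB ▸ hB.le)
        _ < M * (ε * exp (M * (x - a))) := by rw [hφB]; exact mul_lt_mul_of_pos_right hKM hB
        _ = ε * (exp (M * (x - a)) * M) := by ring
  intro x hx
  by_contra! hpos
  have hexp := exp_pos (M * (x - a))
  have hhalf := hfence (φ x / (2 * exp (M * (x - a)))) (by positivity) x hx
  rw [div_mul_eq_mul_div, mul_div_mul_right _ _ hexp.ne'] at hhalf
  linarith

theorem LocallyLipschitz.le_of_subsolution_of_supersolution {f : ℝ → ℝ}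
    (hf : LocallyLipschitz f) {x y x' y' : ℝ → ℝ} {a b : ℝ}
    (hx : ∀ s ∈ Icc a b, HasDerivAt x (x' s) s) (hy : ∀ s ∈ Icc a b, HasDerivAt y (y' s) s)
    (hx' : ∀ s ∈ Ico a b, x' s ≤ f (x s)) (hy' : ∀ s ∈ Ico a b, f (y s) ≤ y' s)
    (ha : x a ≤ y a) : ∀ s ∈ Icc a b, x s ≤ y s := by
  have hxc : ContinuousOn x (Icc a b) := fun s hs => (hx s hs).continuousAt.continuousWithinAt
  have hyc : ContinuousOn y (Icc a b) := fun s hs => (hy s hs).continuousAt.continuousWithinAt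
  obtain ⟨L, hL⟩ := hf.locallyLipschitzOn.exists_lipschitzOnWith_of_compact
    ((isCompact_Icc.image_of_continuousOn hxc).union (isCompact_Icc.image_of_continuousOn hyc))
  have hgap : ∀ s ∈ Ico a b, 0 ≤ x s - y s → x' s - y' s ≤ L * (x s - y s) := by
    intro s hs hnonneg
    have hs' := Ico_subset_Icc_self hs
    calc x' s - y' s ≤ f (x s) - f (y s) := sub_le_sub (hx' s hs) (hy' s hs)
      _ ≤ L * dist (x s) (y s) := (le_abs_self _).trans
          (hL.dist_le_mul _ (.inl (mem_image_of_mem x hs')) _ (.inr (mem_image_of_mem y hs')))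
      _ = L * (x s - y s) := by rw [Real.dist_eq, abs_of_nonneg hnonneg]
  have hderiv : ∀ s ∈ Ico a b, HasDerivWithinAt (fun s => x s - y s) (x' s - y' s) (Ici s) s :=
    fun s hs =>
      ((hx s (Ico_subset_Icc_self hs)).sub (hy s (Ico_subset_Icc_self hs))).hasDerivWithinAt
  exact fun s hs => sub_nonpos.1 <|
    nonpos_of_deriv_right_le_mul_of_nonneg (hxc.sub hyc) hderiv (sub_nonpos.2 ha) hgap s hs

theorem ode_convex_dependence_on_initial_data_general
    (f : ℝ → ℝ) (hconv : ConvexOn ℝ Set.univ f) (hlip : LocallyLipschitz f)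
    (T : ℝ) (U : Set ℝ) (ψ : ℝ → ℝ → ℝ)
    (hinit : ∀ u ∈ U, ψ 0 u = u)
    (hode : ∀ u ∈ U, ∀ t ∈ Set.Icc (0 : ℝ) T,
      HasDerivAt (fun s => ψ s u) (f (ψ t u)) t) :
    ∀ t ∈ Set.Icc (0 : ℝ) T, ∀ u₁ ∈ U, ∀ u₂ ∈ U, ∀ a b : ℝ,
      0 ≤ a → 0 ≤ b → a + b = 1 → a * u₁ + b * u₂ ∈ U →
      ψ t (a * u₁ + b * u₂) ≤ a * ψ t u₁ + b * ψ t u₂ := by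
  intro t ht u₁ hu₁ u₂ hu₂ a b ha hb hab hu
  have hsol : ∀ u ∈ U, ∀ s ∈ Icc 0 t, HasDerivAt (fun s => ψ s u) (f (ψ s u)) s :=
    fun u hu s hs => hode u hu s ⟨hs.1, hs.2.trans ht.2⟩
  refine hlip.le_of_subsolution_of_supersolution (y := fun s => a * ψ s u₁ + b * ψ s u₂)
    (hsol _ hu)
    (fun s hs => ((hsol u₁ hu₁ s hs).const_mul a).add ((hsol u₂ hu₂ s hs).const_mul b))
    (fun _ _ => le_rfl) (fun _ _ => hconv.2 (mem_univ _) (mem_univ _) ha hb hab) ?_ t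
    ⟨ht.1, le_rfl⟩
  rw [hinit _ hu, hinit _ hu₁, hinit _ hu₂]

/-- If f : ℝ → ℝ is convex and locally Lipschitz and ψ(·, u) solves ψ' = f(ψ), ψ(0, u) = u
on [0, T] for each u in a set U of initial values, then for every fixed t ∈ [0, T]
the map u ↦ ψ(t, u) is convex on U. -/
theorem ode_convex_dependence_on_initial_data
    (f : ℝ → ℝ) (hconv : ConvexOn ℝ Set.univ f) (hlip : LocallyLipschitz f)
    (T : ℝ) (hT : 0 < T) (U : Set ℝ) (ψ : ℝ → ℝ → ℝ)
    (hinit : ∀ u ∈ U, ψ 0 u = u)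
    (hode : ∀ u ∈ U, ∀ t ∈ Set.Icc (0 : ℝ) T,
      HasDerivAt (fun s => ψ s u) (f (ψ t u)) t) :
    ∀ t ∈ Set.Icc (0 : ℝ) T, ∀ u₁ ∈ U, ∀ u₂ ∈ U, ∀ a b : ℝ,
      0 ≤ a → 0 ≤ b → a + b = 1 → a * u₁ + b * u₂ ∈ U →
      ψ t (a * u₁ + b * u₂) ≤ a * ψ t u₁ + b * ψ t u₂ :=
  ode_convex_dependence_on_initial_data_general f hconv hlip T U ψ hinit hode
end

section
/- Suppose φ, ψ satisfy the semiflow equations φ(t+s,u) = φ(t,u) + φ(s, ψ(t,u)) and ψ(t+s,u) = ψ(s, ψ(t,u)) for all s,t ≥ 0, with φ(0,u) = 0, ψ(0,u) = u, and that φ, ψ are differentiable in t at 0 with derivatives F(u), R(u). Then φ and ψ are differentiable in t everywhere and satisfy the generalized Riccati equations ∂ₜψ(t,u) = R(ψ(t,u)), ∂ₜφ(t,u) = F(ψ(t,u)). -/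
open Set

section Shift

variable {𝕜 E : Type*} [NontriviallyNormedField 𝕜] [NormedAddCommGroup E] [NormedSpace 𝕜 E]
  {f : 𝕜 → E} {f' : E} {s t : Set 𝕜}

theorem HasDerivWithinAt.comp_sub_const (x a : 𝕜) (hf : HasDerivWithinAt f f' s (x - a))
    (hst : MapsTo (· - a) t s) : HasDerivWithinAt (fun y => f (y - a)) f' t x := by
  simpa [Function.comp_def] using
    hf.scomp_of_eq x ((hasDerivWithinAt_id x t).sub_const a) hst rfl

end Shift

theorem HasDerivWithinAt.comp_sub_const_Ici {E : Type*} [NormedAddCommGroup E] [NormedSpace ℝ E]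
    {f : ℝ → E} {f' : E} (hf : HasDerivWithinAt f f' (Ici 0) 0) (a : ℝ) :
    HasDerivWithinAt (fun x => f (x - a)) f' (Ici a) a := by
  have hf' : HasDerivWithinAt f f' (Ici 0) (a - a) := by rwa [sub_self]
  exact hf'.comp_sub_const a a fun _ hx => mem_Ici.2 (sub_nonneg.2 hx)

theorem semiflow_implies_riccati_general (d : ℕ) (U : Set (Fin d → ℂ))
    (φ : ℝ → (Fin d → ℂ) → ℂ) (ψ : ℝ → (Fin d → ℂ) → (Fin d → ℂ))
    (F : (Fin d → ℂ) → ℂ) (R : (Fin d → ℂ) → (Fin d → ℂ))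
    (hinv : ∀ u ∈ U, ∀ t : ℝ, 0 ≤ t → ψ t u ∈ U)
    (hφflow : ∀ u ∈ U, ∀ s t : ℝ, 0 ≤ s → 0 ≤ t →
      φ (t + s) u = φ t u + φ s (ψ t u))
    (hψflow : ∀ u ∈ U, ∀ s t : ℝ, 0 ≤ s → 0 ≤ t →
      ψ (t + s) u = ψ s (ψ t u))
    (hφder0 : ∀ u ∈ U, HasDerivWithinAt (fun t => φ t u) (F u) (Set.Ici 0) 0)
    (hψder0 : ∀ u ∈ U, HasDerivWithinAt (fun t => ψ t u) (R u) (Set.Ici 0) 0) :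
    ∀ u ∈ U, ∀ t : ℝ, 0 ≤ t →
      HasDerivWithinAt (fun s => ψ s u) (R (ψ t u)) (Set.Ici t) t ∧
      HasDerivWithinAt (fun s => φ s u) (F (ψ t u)) (Set.Ici t) t := by
  intro u hu t ht
  have hψ_shift : ∀ s ∈ Ici t, ψ s u = ψ (s - t) (ψ t u) := fun s hs => by
    simpa only [add_sub_cancel] using hψflow u hu (s - t) t (sub_nonneg.2 hs) ht
  have hφ_shift : ∀ s ∈ Ici t, φ s u = φ t u + φ (s - t) (ψ t u) := fun s hs => by
    simpa only [add_sub_cancel] using hφflow u hu (s - t) t (sub_nonneg.2 hs) ht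
  have hv : ψ t u ∈ U := hinv u hu t ht
  exact ⟨((hψder0 _ hv).comp_sub_const_Ici t).congr_of_mem hψ_shift self_mem_Ici,
    (((hφder0 _ hv).comp_sub_const_Ici t).const_add _).congr_of_mem hφ_shift self_mem_Ici⟩

/-- If (φ, ψ) satisfy the semiflow equations with φ(0,u) = 0, ψ(0,u) = u and are
differentiable in t at t = 0 (from the right) with derivatives F(u), R(u), then they are
differentiable in t everywhere on ℝ₊ and satisfy the generalized Riccati equations
∂ₜψ(t,u) = R(ψ(t,u)) and ∂ₜφ(t,u) = F(ψ(t,u)). -/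
theorem semiflow_implies_riccati (d : ℕ) (U : Set (Fin d → ℂ))
    (φ : ℝ → (Fin d → ℂ) → ℂ) (ψ : ℝ → (Fin d → ℂ) → (Fin d → ℂ))
    (F : (Fin d → ℂ) → ℂ) (R : (Fin d → ℂ) → (Fin d → ℂ))
    (hinv : ∀ u ∈ U, ∀ t : ℝ, 0 ≤ t → ψ t u ∈ U)
    (hφ0 : ∀ u ∈ U, φ 0 u = 0) (hψ0 : ∀ u ∈ U, ψ 0 u = u)
    (hφflow : ∀ u ∈ U, ∀ s t : ℝ, 0 ≤ s → 0 ≤ t →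
      φ (t + s) u = φ t u + φ s (ψ t u))
    (hψflow : ∀ u ∈ U, ∀ s t : ℝ, 0 ≤ s → 0 ≤ t →
      ψ (t + s) u = ψ s (ψ t u))
    (hφder0 : ∀ u ∈ U, HasDerivWithinAt (fun t => φ t u) (F u) (Set.Ici 0) 0)
    (hψder0 : ∀ u ∈ U, HasDerivWithinAt (fun t => ψ t u) (R u) (Set.Ici 0) 0) :
    ∀ u ∈ U, ∀ t : ℝ, 0 ≤ t →
      HasDerivWithinAt (fun s => ψ s u) (R (ψ t u)) (Set.Ici t) t ∧
      HasDerivWithinAt (fun s => φ s u) (F (ψ t u)) (Set.Ici t) t :=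
  semiflow_implies_riccati_general d U φ ψ F R hinv hφflow hψflow hφder0 hψder0
end
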